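/- arXiv:2310.16203 — 6 statements merged into one kernel-verified Lean document; each statement's English description precedes it below -/
import Mathlib

section
/- Let d ≥ 1, let W be a d×d real matrix that is strictly upper triangular (W i k = 0 whenever i ≥ k), let α, δ, κ ∈ ℝ^d, α₂, δ₂ ∈ ℝ, and fix j ∈ {1,…,d}. Let e_j be the j-th standard basis vector and Q_j = I − e_j e_jᵀ. Then: (i) the matrix I − Q_j Wᵀ is invertible; (ii) for every a, m ∈ ℝ, the vector z(a,m) := (m − (α + aδ)_j) · (I − Q_j Wᵀ)^{-1} e_j is the unique z ∈ ℝ^d satisfying e_jᵀ z = m − (α + aδ)_j and z_i = (Wᵀ z)_i for all i ≠ j; (iii) setting F(a) := α₂ + δ₂ a + κᵀ(α + aδ) and G(a,m) := α₂ + δ₂ a + κᵀ(α + aδ + z(a,m)), both a ↦ F(a) and a ↦ G(a,m) are affine functions of a, and the difference of their slopes equals the product δ_j · κᵀ(I − Q_j Wᵀ)^{-1} e_j for every m. -/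
/-! The projection `Qⱼ = I - eⱼeⱼᵀ` is `diagonal (1 - eⱼ)`: it zeroes row `j`, so `Qⱼ Wᵀ` is
strictly lower triangular and `det (I - Qⱼ Wᵀ) = 1`. Row by row, the constraints on `z` say
exactly `(I - Qⱼ Wᵀ) z = c eⱼ` with `c = m - μ(a)ⱼ`, hence `z = c (I - Qⱼ Wᵀ)⁻¹ eⱼ`. As `c` is
affine in `a` with slope `-δⱼ`, the slopes of `F` and `G` differ by `δⱼ κᵀ (I - Qⱼ Wᵀ)⁻¹ eⱼ`. -/

open Matrix

namespace Matrix

variable {n R : Type*} [Fintype n] [DecidableEq n]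

omit [Fintype n] in
theorem one_sub_vecMulVec_single [Ring R] (j : n) :
    1 - vecMulVec (Pi.single j (1 : R)) (Pi.single j 1) = diagonal (1 - Pi.single j 1) := by
  rw [← single_eq_single_vecMulVec_single, ← diagonal_single, ← diagonal_one']
  exact diagonal_sub _ _

theorem one_sub_diagonal_mul_mulVec_eq_smul_single_iff [CommRing R] (M : Matrix n n R)
    (j : n) (w : n → R) (c : R) :
    (1 - diagonal (1 - Pi.single j 1) * M) *ᵥ w = c • Pi.single j 1 ↔
      w j = c ∧ ∀ i, i ≠ j → w i = (M *ᵥ w) i := by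
  simp only [sub_mulVec, one_mulVec, ← mulVec_mulVec, funext_iff, Pi.sub_apply, mulVec_diagonal,
    Pi.smul_apply, smul_eq_mul]
  constructor
  · intro h
    refine ⟨by simpa using h j, fun i hi => ?_⟩
    simpa [hi, sub_eq_zero] using h i
  · rintro ⟨hj, hne⟩ i
    by_cases hi : i = j
    · subst hi; simp [hj]
    · simp [hi, ← hne i hi]

theorem det_one_sub_of_strictlyLower [LinearOrder n] [CommRing R] {N : Matrix n n R}
    (hN : ∀ i k, i ≤ k → N i k = 0) : (1 - N).det = 1 := by
  have hlower : (1 - N).IsLowerTriangular := fun i k (hik : i < k) => by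
    simp [one_apply_ne hik.ne, hN i k hik.le]
  rw [det_of_isLowerTriangular _ hlower]
  exact Finset.prod_eq_one fun i _ => by simp [hN i i le_rfl]

theorem mulVec_eq_iff_eq_inv_mulVec [CommRing R] {A : Matrix n n R} (hA : IsUnit A)
    (w b : n → R) : A *ᵥ w = b ↔ w = A⁻¹ *ᵥ b := by
  have hdet := (isUnit_iff_isUnit_det A).1 hA
  constructor
  · rintro rfl
    rw [mulVec_mulVec, nonsing_inv_mul _ hdet, one_mulVec]
  · rintro rfl
    rw [mulVec_mulVec, mul_nonsing_inv _ hdet, one_mulVec]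

end Matrix

theorem stmt_0_general (d : ℕ)
    (W : Matrix (Fin d) (Fin d) ℝ)
    (hW : ∀ i k : Fin d, k ≤ i → W i k = 0)
    (α δ κ : Fin d → ℝ) (α₂ δ₂ : ℝ) (j : Fin d)
    (e : Fin d → ℝ) (he : e = Pi.single j 1)
    (Q : Matrix (Fin d) (Fin d) ℝ) (hQ : Q = 1 - vecMulVec e e)
    (A : Matrix (Fin d) (Fin d) ℝ) (hA : A = 1 - Q * Wᵀ)
    (z : ℝ → ℝ → Fin d → ℝ)
    (hz : ∀ a m : ℝ, z a m = (m - (α j + a * δ j)) • (A⁻¹ *ᵥ e))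
    (F : ℝ → ℝ) (hF : ∀ a : ℝ, F a = α₂ + δ₂ * a + κ ⬝ᵥ (α + a • δ))
    (G : ℝ → ℝ → ℝ)
    (hG : ∀ a m : ℝ, G a m = α₂ + δ₂ * a + κ ⬝ᵥ (α + a • δ + z a m)) :
    -- (i) invertibility of I − Qⱼ Wᵀ
    IsUnit A ∧
    -- (ii) z a m is the unique solution of the constrained linear system
    (∀ a m : ℝ,
      ((z a m) j = m - (α j + a * δ j) ∧
        ∀ i : Fin d, i ≠ j → (z a m) i = (Wᵀ *ᵥ (z a m)) i) ∧
      (∀ w : Fin d → ℝ,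
        (w j = m - (α j + a * δ j) ∧ ∀ i : Fin d, i ≠ j → w i = (Wᵀ *ᵥ w) i) →
        w = z a m)) ∧
    -- (iii) affineness in a, and the slope difference is the product formula
    (∃ sF sG : ℝ,
      (∀ a : ℝ, F a = F 0 + sF * a) ∧
      (∀ m a : ℝ, G a m = G 0 m + sG * a) ∧
      sF - sG = δ j * (κ ⬝ᵥ (A⁻¹ *ᵥ e))) := by
  subst he hQ
  rw [one_sub_vecMulVec_single] at hA
  have hUnit : IsUnit A := by
    rw [hA, isUnit_iff_isUnit_det, det_one_sub_of_strictlyLower fun i k hik => ?_]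
    · exact isUnit_one
    · rw [diagonal_mul, transpose_apply, hW k i hik, mul_zero]
  have hsolve : ∀ (c : ℝ) (w : Fin d → ℝ),
      (w j = c ∧ ∀ i, i ≠ j → w i = (Wᵀ *ᵥ w) i) ↔ w = c • A⁻¹ *ᵥ Pi.single j 1 := by
    intro c w
    rw [← one_sub_diagonal_mul_mulVec_eq_smul_single_iff, ← hA,
      mulVec_eq_iff_eq_inv_mulVec hUnit, mulVec_smul]
  refine ⟨hUnit, fun a m => ?_, ?_⟩
  · rw [hz]
    exact ⟨(hsolve _ _).2 rfl, fun w hw => (hsolve _ w).1 hw⟩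
  · refine ⟨δ₂ + κ ⬝ᵥ δ, δ₂ + κ ⬝ᵥ δ - δ j * (κ ⬝ᵥ (A⁻¹ *ᵥ Pi.single j 1)),
      fun a => ?_, fun m a => ?_, by ring⟩
    · simp only [hF, dotProduct_add, dotProduct_smul, smul_eq_mul]
      ring
    · simp only [hG, hz, dotProduct_add, dotProduct_smul, smul_eq_mul]
      ring

/-- Single-stage product formula for the individual mediation effect of mediator `j`
in the linear SEM: `μ(a) = α + a • δ` is the mean mediator vector, `W` the strictly
upper triangular weight matrix, `F a` the mean outcome intervening on the treatment
alone, `G a m` the mean outcome additionally setting mediator `j` to `m`, with `z a m`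
the induced shift of the other mediators.  The difference of slopes is
`δ j * κᵀ (I - Qⱼ Wᵀ)⁻¹ eⱼ`. -/
theorem stmt_0 (d : ℕ) (hd : 1 ≤ d)
    (W : Matrix (Fin d) (Fin d) ℝ)
    (hW : ∀ i k : Fin d, k ≤ i → W i k = 0)
    (α δ κ : Fin d → ℝ) (α₂ δ₂ : ℝ) (j : Fin d)
    (e : Fin d → ℝ) (he : e = Pi.single j 1)
    (Q : Matrix (Fin d) (Fin d) ℝ) (hQ : Q = 1 - vecMulVec e e)
    (A : Matrix (Fin d) (Fin d) ℝ) (hA : A = 1 - Q * Wᵀ)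
    (z : ℝ → ℝ → Fin d → ℝ)
    (hz : ∀ a m : ℝ, z a m = (m - (α j + a * δ j)) • (A⁻¹ *ᵥ e))
    (F : ℝ → ℝ) (hF : ∀ a : ℝ, F a = α₂ + δ₂ * a + κ ⬝ᵥ (α + a • δ))
    (G : ℝ → ℝ → ℝ)
    (hG : ∀ a m : ℝ, G a m = α₂ + δ₂ * a + κ ⬝ᵥ (α + a • δ + z a m)) :
    -- (i) invertibility of I − Qⱼ Wᵀ
    IsUnit A ∧
    -- (ii) z a m is the unique solution of the constrained linear system
    (∀ a m : ℝ,
      ((z a m) j = m - (α j + a * δ j) ∧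
        ∀ i : Fin d, i ≠ j → (z a m) i = (Wᵀ *ᵥ (z a m)) i) ∧
      (∀ w : Fin d → ℝ,
        (w j = m - (α j + a * δ j) ∧ ∀ i : Fin d, i ≠ j → w i = (Wᵀ *ᵥ w) i) →
        w = z a m)) ∧
    -- (iii) affineness in a, and the slope difference is the product formula
    (∃ sF sG : ℝ,
      (∀ a : ℝ, F a = F 0 + sF * a) ∧
      (∀ m a : ℝ, G a m = G 0 m + sG * a) ∧
      sF - sG = δ j * (κ ⬝ᵥ (A⁻¹ *ᵥ e))) :=
  stmt_0_general d W hW α δ κ α₂ δ₂ j e he Q hQ A hA z hz F hF G hG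
end

section
/- Let d ≥ 1 and T ≥ 1. For each t = 1,…,T let α_{1t}, δ_{1t}, ζ_{1t}, γ_{2t}, κ_t ∈ ℝ^d, Γ_{1t} ∈ ℝ^{d×d}, and α_{2t}, δ_{2t}, ζ_{2t} ∈ ℝ, and fix initial values x₀ ∈ ℝ^d, y₀ ∈ ℝ. For a ∈ ℝ define sequences x_t(a) ∈ ℝ^d and y_t(a) ∈ ℝ by x_t(a) = α_{1t} + a δ_{1t} + Γ_{1t} x_{t−1}(a) + ζ_{1t} y_{t−1}(a) and y_t(a) = α_{2t} + a δ_{2t} + γ_{2t}ᵀ x_{t−1}(a) + ζ_{2t} y_{t−1}(a) + κ_tᵀ x_t(a), with x₀(a) = x₀, y₀(a) = y₀. For 1 ≤ s ≤ t ≤ T define v_{s,t} ∈ ℝ^d and u_{s,t} ∈ ℝ by v_{s,s} = δ_{1s}, u_{s,s} = δ_{2s} + κ_sᵀ δ_{1s}, and for t > s: v_{s,t} = Γ_{1t} v_{s,t−1} + ζ_{1t} u_{s,t−1} and u_{s,t} = ζ_{2t} u_{s,t−1} + κ_tᵀ v_{s,t} + γ_{2t}ᵀ v_{s,t−1}. Then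 for every a ∈ ℝ and every t = 1,…,T one has x_t(a) = x_t(0) + a Σ_{s=1}^t v_{s,t} and y_t(a) = y_t(0) + a Σ_{s=1}^t u_{s,t}. -/
open Matrix Finset

lemma dot_sum_aux {d : ℕ} (κ : Fin d → ℝ) (S : Finset ℕ) (f : ℕ → Fin d → ℝ) :
    κ ⬝ᵥ (∑ s ∈ S, f s) = ∑ s ∈ S, κ ⬝ᵥ f s := by
  simp only [dotProduct, Finset.sum_apply, Finset.mul_sum]
  exact Finset.sum_comm

lemma mulVec_sum_aux {d : ℕ} (Γ : Matrix (Fin d) (Fin d) ℝ) (S : Finset ℕ)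
    (f : ℕ → Fin d → ℝ) :
    Γ *ᵥ (∑ s ∈ S, f s) = ∑ s ∈ S, Γ *ᵥ f s := by
  exact map_sum Γ.mulVecLin f S

/-- Finite-horizon identification (analytic core of Theorem 1): under the time-varying
linear SEM, the mean mediator vector `x a t` and mean outcome `y a t` under
`do(A₁ = ⋯ = A_t = a)` are affine in `a`, with slopes given by the sums of the
per-stage effects `v s t = θ_{A_s→M_t}` and `u s t = θ_{A_s→R_t}` defined by the
cross-stage transition recursions. -/
theorem stmt_1 (d T : ℕ) (hd : 1 ≤ d) (hT : 1 ≤ T)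
    (α₁ δ₁ ζ₁ γ₂ κ : ℕ → Fin d → ℝ) (Γ₁ : ℕ → Matrix (Fin d) (Fin d) ℝ)
    (α₂ δ₂ ζ₂ : ℕ → ℝ) (x₀ : Fin d → ℝ) (y₀ : ℝ)
    (x : ℝ → ℕ → Fin d → ℝ) (y : ℝ → ℕ → ℝ)
    (hx0 : ∀ a : ℝ, x a 0 = x₀) (hy0 : ∀ a : ℝ, y a 0 = y₀)
    (hx : ∀ a : ℝ, ∀ t : ℕ, 1 ≤ t → t ≤ T →
      x a t = α₁ t + a • δ₁ t + Γ₁ t *ᵥ x a (t - 1) + (y a (t - 1)) • ζ₁ t)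
    (hy : ∀ a : ℝ, ∀ t : ℕ, 1 ≤ t → t ≤ T →
      y a t = α₂ t + a * δ₂ t + γ₂ t ⬝ᵥ x a (t - 1) + ζ₂ t * y a (t - 1) +
        κ t ⬝ᵥ x a t)
    (v : ℕ → ℕ → Fin d → ℝ) (u : ℕ → ℕ → ℝ)
    (hvss : ∀ s : ℕ, 1 ≤ s → s ≤ T → v s s = δ₁ s)
    (huss : ∀ s : ℕ, 1 ≤ s → s ≤ T → u s s = δ₂ s + κ s ⬝ᵥ δ₁ s)
    (hv : ∀ s t : ℕ, 1 ≤ s → s < t → t ≤ T →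
      v s t = Γ₁ t *ᵥ v s (t - 1) + (u s (t - 1)) • ζ₁ t)
    (hu : ∀ s t : ℕ, 1 ≤ s → s < t → t ≤ T →
      u s t = ζ₂ t * u s (t - 1) + κ t ⬝ᵥ v s t + γ₂ t ⬝ᵥ v s (t - 1)) :
    ∀ a : ℝ, ∀ t : ℕ, 1 ≤ t → t ≤ T →
      x a t = x 0 t + a • (∑ s ∈ Finset.Icc 1 t, v s t) ∧
      y a t = y 0 t + a * (∑ s ∈ Finset.Icc 1 t, u s t) := by
  intro a t
  induction t with
  | zero => omega
  | succ n ih =>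
    intro h1 hnT
    have hxa := hx a (n + 1) (by omega) hnT
    have hx0' := hx 0 (n + 1) (by omega) hnT
    have hya := hy a (n + 1) (by omega) hnT
    have hy0' := hy 0 (n + 1) (by omega) hnT
    simp only [Nat.add_sub_cancel] at hxa hx0' hya hy0'
    by_cases hn : n = 0
    · subst hn
      have hS : Finset.Icc 1 1 = {1} := by decide
      have hvs := hvss 1 le_rfl hnT
      have hus := huss 1 le_rfl hnT
      constructor
      · rw [hxa, hx0', hx0 a, hx0 0, hy0 a, hy0 0, hS, Finset.sum_singleton, hvs]
        module
      · rw [hya, hy0', hS, Finset.sum_singleton, hus, hxa, hx0', hx0 a, hx0 0,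
          hy0 a, hy0 0]
        simp only [dotProduct_add, dotProduct_smul, smul_eq_mul, zero_smul,
          zero_mul, add_zero, zero_add]
        ring
    · have hn1 : 1 ≤ n := by omega
      have hnT' : n ≤ T := by omega
      obtain ⟨ihx, ihy⟩ := ih hn1 hnT'
      -- sum identities
      have hSv : (∑ s ∈ Finset.Icc 1 (n + 1), v s (n + 1)) =
          Γ₁ (n + 1) *ᵥ (∑ s ∈ Finset.Icc 1 n, v s n) +
          (∑ s ∈ Finset.Icc 1 n, u s n) • ζ₁ (n + 1) + δ₁ (n + 1) := by
        rw [Finset.sum_Icc_succ_top (by omega : 1 ≤ n + 1),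
          hvss (n + 1) (by omega) hnT]
        congr 1
        rw [Finset.sum_congr rfl (fun s hs => by
          have hs' := Finset.mem_Icc.mp hs
          have := hv s (n + 1) hs'.1 (by omega) hnT
          simpa using this)]
        rw [Finset.sum_add_distrib, mulVec_sum_aux, Finset.sum_smul]
      have hSu : (∑ s ∈ Finset.Icc 1 (n + 1), u s (n + 1)) =
          ζ₂ (n + 1) * (∑ s ∈ Finset.Icc 1 n, u s n) +
          κ (n + 1) ⬝ᵥ (∑ s ∈ Finset.Icc 1 (n + 1), v s (n + 1)) +
          γ₂ (n + 1) ⬝ᵥ (∑ s ∈ Finset.Icc 1 n, v s n) + δ₂ (n + 1) := by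
        rw [Finset.sum_Icc_succ_top (by omega : 1 ≤ n + 1),
          huss (n + 1) (by omega) hnT]
        rw [Finset.sum_congr rfl (fun s hs => by
          have hs' := Finset.mem_Icc.mp hs
          have := hu s (n + 1) hs'.1 (by omega) hnT
          simpa using this)]
        rw [Finset.sum_add_distrib, Finset.sum_add_distrib,
          Finset.sum_Icc_succ_top (by omega : 1 ≤ n + 1),
          hvss (n + 1) (by omega) hnT, dotProduct_add,
          dot_sum_aux (κ (n+1)), dot_sum_aux (γ₂ (n+1)), ← Finset.mul_sum]
        ring
      have hxgoal : x a (n + 1) = x 0 (n + 1) +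
          a • (∑ s ∈ Finset.Icc 1 (n + 1), v s (n + 1)) := by
        rw [hxa, hx0', ihx, ihy, hSv]
        simp only [Matrix.mulVec_add, Matrix.mulVec_smul, zero_smul, zero_mul,
          add_zero, zero_add]
        module
      refine ⟨hxgoal, ?_⟩
      rw [hya, hy0', ihx, ihy, hxgoal, hSu]
      simp only [dotProduct_add, dotProduct_smul, smul_eq_mul, zero_smul,
        zero_mul, add_zero, zero_add]
      ring
end

section
/- Let a, c : ℕ → ℝ be real sequences indexed from 1, and define η : ℕ → ℝ by η₀ = 0 and, for T ≥ 1, η_T = (1/T)·[(T−1)·η_{T−1} + Σ_{s=1}^T Σ_{i=s}^T a_{i−s+1} c_{T−i+1}]. Then for every T ≥ 1, T·η_T = c₁ · Σ_{t=1}^T (T−t+1) a_t + Σ_{t=1}^{T−1} c_{t+1} · Σ_{s=1}^{T−t} (T−t−s+1) a_s; equivalently, T·η_T = Σ_{r=1}^T c_r · Σ_{s=1}^{T−r+1} (T−r+1−s+1) a_s. -/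
open Finset

private lemma swap_tri (T : ℕ) (f : ℕ → ℕ → ℝ) :
    ∑ s ∈ Icc 1 T, ∑ i ∈ Icc s T, f s i = ∑ i ∈ Icc 1 T, ∑ s ∈ Icc 1 i, f s i := by
  rw [Finset.sum_sigma', Finset.sum_sigma']
  apply Finset.sum_nbij' (fun p => (⟨p.2, p.1⟩ : Σ _ : ℕ, ℕ))
      (fun p => (⟨p.2, p.1⟩ : Σ _ : ℕ, ℕ)) <;>
    simp [Finset.mem_sigma, Finset.mem_Icc] <;> omega

private lemma rev_Icc (n : ℕ) (g : ℕ → ℝ) :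
    ∑ r ∈ Icc 1 n, g r = ∑ r ∈ Icc 1 n, g (n - r + 1) := by
  apply Finset.sum_nbij' (fun r => n - r + 1) (fun r => n - r + 1)
  · simp [Finset.mem_Icc]; omega
  · simp [Finset.mem_Icc]; omega
  · intro x hx; simp [Finset.mem_Icc] at hx; omega
  · intro x hx; simp [Finset.mem_Icc] at hx; omega
  · intro x hx; simp [Finset.mem_Icc] at hx; congr 1; omega

private lemma D_reindex (a c : ℕ → ℝ) (T : ℕ) :
    ∑ s ∈ Icc 1 T, ∑ i ∈ Icc s T, a (i - s + 1) * c (T - i + 1)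
      = ∑ r ∈ Icc 1 T, c r * ∑ k ∈ Icc 1 (T - r + 1), a k := by
  rw [swap_tri]
  have h1 : ∀ i ∈ Icc 1 T, ∑ s ∈ Icc 1 i, a (i - s + 1) * c (T - i + 1)
      = c (T - i + 1) * ∑ k ∈ Icc 1 i, a k := by
    intro i hi
    rw [Finset.mul_sum]
    rw [rev_Icc i (fun k => c (T - i + 1) * a k)]
    apply Finset.sum_congr rfl
    intro s hs; simp [Finset.mem_Icc] at hs; ring
  rw [Finset.sum_congr rfl h1]
  rw [rev_Icc T (fun i => c (T - i + 1) * ∑ k ∈ Icc 1 i, a k)]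
  apply Finset.sum_congr rfl
  intro r hr; simp [Finset.mem_Icc] at hr
  have : T - (T - r + 1) + 1 = r := by omega
  rw [this]

private noncomputable def F (a c : ℕ → ℝ) (T : ℕ) : ℝ :=
  ∑ r ∈ Icc 1 T, c r * (∑ s ∈ Icc 1 (T - r + 1), ((T - r + 1 - s + 1 : ℕ) : ℝ) * a s)

private lemma F_step (a c : ℕ → ℝ) (T : ℕ) :
    F a c (T + 1) = F a c T + ∑ r ∈ Icc 1 (T + 1), c r * ∑ k ∈ Icc 1 (T + 1 - r + 1), a k := by
  unfold F
  rw [Finset.sum_Icc_succ_top (by omega : 1 ≤ T + 1),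
      Finset.sum_Icc_succ_top (by omega : 1 ≤ T + 1)]
  have htop1 : T + 1 - (T + 1) + 1 = 1 := by omega
  rw [htop1]
  simp only [Finset.Icc_self, Finset.sum_singleton]
  have hmain : ∀ r ∈ Icc 1 T,
      c r * (∑ s ∈ Icc 1 (T + 1 - r + 1), ((T + 1 - r + 1 - s + 1 : ℕ) : ℝ) * a s)
      = c r * (∑ s ∈ Icc 1 (T - r + 1), ((T - r + 1 - s + 1 : ℕ) : ℝ) * a s)
        + c r * ∑ k ∈ Icc 1 (T + 1 - r + 1), a k := by
    intro r hr; simp [Finset.mem_Icc] at hr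
    rw [← mul_add]
    congr 1
    have hT : T + 1 - r + 1 = (T - r + 1) + 1 := by omega
    rw [hT, Finset.sum_Icc_succ_top (by omega : 1 ≤ T - r + 1 + 1),
        Finset.sum_Icc_succ_top (by omega : 1 ≤ T - r + 1 + 1)]
    have htop : T - r + 1 + 1 - (T - r + 1 + 1) + 1 = 1 := by omega
    rw [htop]
    have hterm : ∀ s ∈ Icc 1 (T - r + 1),
        ((T - r + 1 + 1 - s + 1 : ℕ) : ℝ) * a s
        = ((T - r + 1 - s + 1 : ℕ) : ℝ) * a s + a s := by
      intro s hs; simp [Finset.mem_Icc] at hs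
      have h : T - r + 1 + 1 - s + 1 = (T - r + 1 - s + 1) + 1 := by omega
      rw [h]; push_cast; ring
    rw [Finset.sum_congr rfl hterm, Finset.sum_add_distrib]
    push_cast; ring
  rw [Finset.sum_congr rfl hmain, Finset.sum_add_distrib]
  norm_num
  ring

private lemma key (a c : ℕ → ℝ) (η : ℕ → ℝ) (hη0 : η 0 = 0)
    (hη : ∀ T : ℕ, 1 ≤ T → η T = (1 / (T : ℝ)) *
      (((T - 1 : ℕ) : ℝ) * η (T - 1) +
        ∑ s ∈ Finset.Icc 1 T, ∑ i ∈ Finset.Icc s T, a (i - s + 1) * c (T - i + 1))) :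
    ∀ T : ℕ, 1 ≤ T → (T : ℝ) * η T = F a c T := by
  intro T hT
  induction T, hT using Nat.le_induction with
  | base =>
    rw [hη 1 le_rfl]
    norm_num [hη0, F]
    ring
  | succ n hn ih =>
    have h := hη (n + 1) (by omega)
    simp only [Nat.add_sub_cancel] at h
    have hne : ((n + 1 : ℕ) : ℝ) ≠ 0 := by positivity
    have hmul : ((n + 1 : ℕ) : ℝ) * η (n + 1)
        = (n : ℝ) * η n
          + ∑ s ∈ Icc 1 (n + 1), ∑ i ∈ Icc s (n + 1), a (i - s + 1) * c (n + 1 - i + 1) := by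
      rw [h]; push_cast; field_simp
    push_cast at hmul ⊢
    rw [hmul, ih, D_reindex, F_step]

/-- Closed form of the stationary mediation-effect recursion (induction step in the
proof of Theorem 2): with `a` the lagged treatment-to-mediator effects, `c` the lagged
intervened mediator-to-outcome effects, and `η` defined by the Theorem 1 recursion,
`T·η_T = c₁ Σ_{t=1}^T (T−t+1) a_t + Σ_{t=1}^{T−1} c_{t+1} Σ_{s=1}^{T−t} (T−t−s+1) a_s`,
equivalently `T·η_T = Σ_{r=1}^T c_r Σ_{s=1}^{T−r+1} (T−r+2−s) a_s`. -/
theorem stmt_3 (a c : ℕ → ℝ) (η : ℕ → ℝ) (hη0 : η 0 = 0)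
    (hη : ∀ T : ℕ, 1 ≤ T → η T = (1 / (T : ℝ)) *
      (((T - 1 : ℕ) : ℝ) * η (T - 1) +
        ∑ s ∈ Finset.Icc 1 T, ∑ i ∈ Finset.Icc s T, a (i - s + 1) * c (T - i + 1))) :
    ∀ T : ℕ, 1 ≤ T →
      ((T : ℝ) * η T =
        c 1 * (∑ t ∈ Finset.Icc 1 T, ((T - t + 1 : ℕ) : ℝ) * a t) +
          ∑ t ∈ Finset.Icc 1 (T - 1), c (t + 1) *
            (∑ s ∈ Finset.Icc 1 (T - t), ((T - t - s + 1 : ℕ) : ℝ) * a s)) ∧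
      ((T : ℝ) * η T =
        ∑ r ∈ Finset.Icc 1 T, c r *
          (∑ s ∈ Finset.Icc 1 (T - r + 1), ((T - r + 1 - s + 1 : ℕ) : ℝ) * a s)) := by
  intro T hT
  have h2 := key a c η hη0 hη T hT
  refine ⟨?_, h2⟩
  rw [h2]
  unfold F
  rw [show Icc 1 T = insert 1 (Icc 2 T) by ext x; simp [Finset.mem_Icc]; omega,
      Finset.sum_insert (by simp)]
  congr 1
  · rw [show T - 1 + 1 = T by omega,
        show insert 1 (Icc 2 T) = Icc 1 T by ext x; simp [Finset.mem_Icc]; omega]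
  · apply Finset.sum_nbij' (fun r => r - 1) (fun t => t + 1)
    · simp [Finset.mem_Icc]; omega
    · simp [Finset.mem_Icc]; omega
    · intro x hx; simp [Finset.mem_Icc] at hx; omega
    · intro x hx; simp [Finset.mem_Icc] at hx; omega
    · intro r hr; simp [Finset.mem_Icc] at hr
      rw [show r - 1 + 1 = r by omega, show T - (r - 1) = T - r + 1 by omega]
end

section
/- Let d ≥ 1, δ₁, ζ₁, κ, γ₂ ∈ ℝ^d, Γ₁ ∈ ℝ^{d×d}, and δ₂, ζ₂ ∈ ℝ. Let m : ℕ → ℝ^d and r : ℕ → ℝ (indexed from 1) satisfy m₁ = δ₁, r₁ = δ₂ + κᵀδ₁, and, for t ≥ 2, m_t = Γ₁ m_{t−1} + ζ₁ r_{t−1} and r_t = ζ₂ r_{t−1} + κᵀ m_t + γ₂ᵀ m_{t−1}. Suppose the series Σ_{t=1}^∞ m_t converges to M ∈ ℝ^d, the series Σ_{t=1}^∞ r_t converges to R ∈ ℝ, and the matrix A := (1−ζ₂)(I − Γ₁) − ζ₁(κ + γ₂)ᵀ is invertible. Then (1−ζ₂) R = δ₂ + (κ + γ₂)ᵀ M,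 M = A^{-1}[(1−ζ₂) δ₁ + δ₂ ζ₁], and moreover the Cesàro double average (1/T) Σ_{t=1}^T Σ_{s=1}^t m_s converges to M as T → ∞. -/
open Matrix Filter Finset

private lemma dot_tendsto {d : ℕ} (κ : Fin d → ℝ) {f : ℕ → Fin d → ℝ} {L : Fin d → ℝ}
    (h : Tendsto f atTop (nhds L)) :
    Tendsto (fun n => κ ⬝ᵥ f n) atTop (nhds (κ ⬝ᵥ L)) := by
  simp only [dotProduct]
  exact tendsto_finset_sum _ fun i _ =>
    tendsto_const_nhds.mul (((continuous_apply i).tendsto L).comp h)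

private lemma mv_tendsto {d : ℕ} (Γ : Matrix (Fin d) (Fin d) ℝ) {f : ℕ → Fin d → ℝ}
    {L : Fin d → ℝ} (h : Tendsto f atTop (nhds L)) :
    Tendsto (fun n => Γ *ᵥ f n) atTop (nhds (Γ *ᵥ L)) := by
  rw [tendsto_pi_nhds]
  intro i
  simpa [Matrix.mulVec] using dot_tendsto (Γ i) h

private lemma vecMulVec_mulVec' {d : ℕ} (a b v : Fin d → ℝ) :
    vecMulVec a b *ᵥ v = (b ⬝ᵥ v) • a := by
  funext i
  simp only [Pi.smul_apply, smul_eq_mul, Matrix.mulVec, dotProduct, Matrix.vecMulVec_apply,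
    Finset.sum_mul]
  exact Finset.sum_congr rfl fun j _ => by ring

/-- Closed form for the quantity `B₁` of the infinite-horizon identification theorem:
with `m t = θ_{A₁→M_t}` and `r t = θ_{A₁→R_t}` satisfying the coupled linear
recursion, if the series converge to `M` and `R` and
`A = (1−ζ₂)(I − Γ₁) − ζ₁(κ + γ₂)ᵀ` is invertible, then
`(1−ζ₂) R = δ₂ + (κ+γ₂)ᵀ M`, `M = A⁻¹[(1−ζ₂)δ₁ + δ₂ ζ₁]`, and the Cesàro double
average of the `m`'s also converges to `M`. -/
theorem stmt_4 (d : ℕ) (hd : 1 ≤ d)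
    (δ₁ ζ₁ κ γ₂ : Fin d → ℝ) (Γ₁ : Matrix (Fin d) (Fin d) ℝ) (δ₂ ζ₂ : ℝ)
    (m : ℕ → Fin d → ℝ) (r : ℕ → ℝ)
    (hm1 : m 1 = δ₁) (hr1 : r 1 = δ₂ + κ ⬝ᵥ δ₁)
    (hm : ∀ t : ℕ, 2 ≤ t → m t = Γ₁ *ᵥ m (t - 1) + (r (t - 1)) • ζ₁)
    (hr : ∀ t : ℕ, 2 ≤ t →
      r t = ζ₂ * r (t - 1) + κ ⬝ᵥ m t + γ₂ ⬝ᵥ m (t - 1))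
    (M : Fin d → ℝ) (R : ℝ)
    (hM : Tendsto (fun T : ℕ => ∑ t ∈ Finset.Icc 1 T, m t) atTop (nhds M))
    (hR : Tendsto (fun T : ℕ => ∑ t ∈ Finset.Icc 1 T, r t) atTop (nhds R))
    (A : Matrix (Fin d) (Fin d) ℝ)
    (hA : A = (1 - ζ₂) • ((1 : Matrix (Fin d) (Fin d) ℝ) - Γ₁) - vecMulVec ζ₁ (κ + γ₂))
    (hAu : IsUnit A) :
    (1 - ζ₂) * R = δ₂ + (κ + γ₂) ⬝ᵥ M ∧
    M = A⁻¹ *ᵥ ((1 - ζ₂) • δ₁ + δ₂ • ζ₁) ∧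
    Tendsto (fun T : ℕ => (1 / (T : ℝ)) •
        ∑ t ∈ Finset.Icc 1 T, ∑ s ∈ Finset.Icc 1 t, m s) atTop (nhds M) := by
  set Sm : ℕ → Fin d → ℝ := fun T => ∑ t ∈ Finset.Icc 1 T, m t with hSm
  set Sr : ℕ → ℝ := fun T => ∑ t ∈ Finset.Icc 1 T, r t with hSr
  have hSm_succ : ∀ T : ℕ, 1 ≤ T → Sm (T + 1) = Sm T + m (T + 1) := by
    intro T hT
    simp only [hSm]
    rw [← Finset.Ico_add_one_right_eq_Icc, Finset.sum_Ico_succ_top (by omega), Finset.Ico_add_one_right_eq_Icc]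
  have hSr_succ : ∀ T : ℕ, 1 ≤ T → Sr (T + 1) = Sr T + r (T + 1) := by
    intro T hT
    simp only [hSr]
    rw [← Finset.Ico_add_one_right_eq_Icc, Finset.sum_Ico_succ_top (by omega), Finset.Ico_add_one_right_eq_Icc]
  have hSm1 : Sm 1 = δ₁ := by simp [hSm, hm1]
  have hSr1 : Sr 1 = r 1 := by simp [hSr]
  -- key summed recursions
  have key : ∀ T : ℕ, 1 ≤ T →
      Sm (T + 1) = δ₁ + Γ₁ *ᵥ Sm T + Sr T • ζ₁ ∧
      Sr (T + 1) = r 1 + ζ₂ * Sr T + κ ⬝ᵥ (Sm (T + 1) - δ₁) + γ₂ ⬝ᵥ Sm T := by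
    intro T hT
    induction T, hT using Nat.le_induction with
    | base =>
      have h2 : Sm 2 = Sm 1 + m 2 := hSm_succ 1 le_rfl
      have h2r : Sr 2 = Sr 1 + r 2 := hSr_succ 1 le_rfl
      have hm2 : m 2 = Γ₁ *ᵥ m 1 + r 1 • ζ₁ := by simpa using hm 2 le_rfl
      have hr2 : r 2 = ζ₂ * r 1 + κ ⬝ᵥ m 2 + γ₂ ⬝ᵥ m 1 := by simpa using hr 2 le_rfl
      constructor
      · rw [h2, hm2, hSm1, hSr1, hm1]; abel
      · rw [h2r, hr2, hSr1, hSm1, h2, hSm1, hm1]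
        simp only [add_sub_cancel_left]
        ring
    | succ T hT ih =>
      obtain ⟨ihm, ihr⟩ := ih
      have hmT : m (T + 2) = Γ₁ *ᵥ m (T + 1) + r (T + 1) • ζ₁ := by
        have := hm (T + 2) (by omega)
        simpa using this
      have hrT : r (T + 2) = ζ₂ * r (T + 1) + κ ⬝ᵥ m (T + 2) + γ₂ ⬝ᵥ m (T + 1) := by
        have := hr (T + 2) (by omega)
        simpa using this
      constructor
      · calc Sm (T + 1 + 1) = Sm (T + 1) + m (T + 1 + 1) := hSm_succ (T + 1) (by omega)
          _ = (δ₁ + Γ₁ *ᵥ Sm T + Sr T • ζ₁) + (Γ₁ *ᵥ m (T + 1) + r (T + 1) • ζ₁) := by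
              rw [ihm, show T + 1 + 1 = T + 2 from rfl, hmT]
          _ = δ₁ + Γ₁ *ᵥ (Sm T + m (T + 1)) + (Sr T + r (T + 1)) • ζ₁ := by
              rw [Matrix.mulVec_add, add_smul]; abel
          _ = δ₁ + Γ₁ *ᵥ Sm (T + 1) + Sr (T + 1) • ζ₁ := by
              rw [hSm_succ T hT, hSr_succ T hT]
      · calc Sr (T + 1 + 1) = Sr (T + 1) + r (T + 1 + 1) := hSr_succ (T + 1) (by omega)
          _ = (r 1 + ζ₂ * Sr T + κ ⬝ᵥ (Sm (T + 1) - δ₁) + γ₂ ⬝ᵥ Sm T)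
                + (ζ₂ * r (T + 1) + κ ⬝ᵥ m (T + 1 + 1) + γ₂ ⬝ᵥ m (T + 1)) := by
              rw [ihr, show T + 1 + 1 = T + 2 from rfl, hrT]
          _ = r 1 + ζ₂ * Sr (T + 1) + κ ⬝ᵥ (Sm (T + 1) + m (T + 1 + 1) - δ₁)
                + γ₂ ⬝ᵥ (Sm T + m (T + 1)) := by
              rw [hSr_succ T hT]
              simp only [dotProduct_sub, dotProduct_add]
              ring
          _ = r 1 + ζ₂ * Sr (T + 1) + κ ⬝ᵥ (Sm (T + 1 + 1) - δ₁) + γ₂ ⬝ᵥ Sm (T + 1) := by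
              rw [hSm_succ (T + 1) (by omega), hSm_succ T hT]
  -- limits along the shift
  have hshift : Tendsto (fun T : ℕ => T + 1) atTop atTop := tendsto_add_atTop_nat 1
  have hM' : Tendsto (fun T => Sm (T + 1)) atTop (nhds M) := hM.comp hshift
  have hR' : Tendsto (fun T => Sr (T + 1)) atTop (nhds R) := hR.comp hshift
  have eq1 : M = δ₁ + Γ₁ *ᵥ M + R • ζ₁ := by
    refine tendsto_nhds_unique hM' ?_
    have h2 : Tendsto (fun T => δ₁ + Γ₁ *ᵥ Sm T + Sr T • ζ₁) atTop
        (nhds (δ₁ + Γ₁ *ᵥ M + R • ζ₁)) :=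
      ((tendsto_const_nhds.add (mv_tendsto Γ₁ hM)).add (hR.smul_const ζ₁))
    refine h2.congr' ?_
    filter_upwards [eventually_ge_atTop 1] with T hT
    exact ((key T hT).1).symm
  have eq2 : R = r 1 + ζ₂ * R + κ ⬝ᵥ (M - δ₁) + γ₂ ⬝ᵥ M := by
    refine tendsto_nhds_unique hR' ?_
    have h2 : Tendsto (fun T => r 1 + ζ₂ * Sr T + κ ⬝ᵥ (Sm (T + 1) - δ₁) + γ₂ ⬝ᵥ Sm T)
        atTop (nhds (r 1 + ζ₂ * R + κ ⬝ᵥ (M - δ₁) + γ₂ ⬝ᵥ M)) := by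
      refine (((tendsto_const_nhds.add (hR.const_mul ζ₂)).add
        (dot_tendsto κ (hM'.sub tendsto_const_nhds))).add (dot_tendsto γ₂ hM))
    refine h2.congr' ?_
    filter_upwards [eventually_ge_atTop 1] with T hT
    exact ((key T hT).2).symm
  have part1 : (1 - ζ₂) * R = δ₂ + (κ + γ₂) ⬝ᵥ M := by
    have h2 := eq2
    rw [hr1] at h2
    simp only [dotProduct_sub, add_dotProduct] at h2 ⊢
    linarith
  refine ⟨part1, ?_, ?_⟩
  · -- closed form for M
    have hAM : A *ᵥ M = (1 - ζ₂) • δ₁ + δ₂ • ζ₁ := by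
      rw [hA, Matrix.sub_mulVec, Matrix.smul_mulVec, Matrix.sub_mulVec,
        Matrix.one_mulVec, vecMulVec_mulVec']
      have hMd : M - Γ₁ *ᵥ M = δ₁ + R • ζ₁ := by
        nth_rewrite 1 [eq1]
        abel
      rw [hMd, smul_add, smul_smul]
      have : (1 - ζ₂) * R = δ₂ + (κ + γ₂) ⬝ᵥ M := part1
      rw [this, add_smul]
      abel
    have hdet : IsUnit A.det := (Matrix.isUnit_iff_isUnit_det A).mp hAu
    rw [← hAM, Matrix.mulVec_mulVec, Matrix.nonsing_inv_mul A hdet, Matrix.one_mulVec]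
  · -- Cesàro
    have hu : Tendsto (fun n : ℕ => Sm (1 + n)) atTop (nhds M) := by
      simpa [add_comm] using hM'
    have hc := hu.cesaro_smul
    refine hc.congr fun T => ?_
    rw [one_div]
    congr 1
    rw [← Finset.Ico_add_one_right_eq_Icc, Finset.sum_Ico_eq_sum_range]
    simp [hSm]
end

section
/- Let a, c : ℕ → ℝ (indexed from 1), define L_T := Σ_{s=1}^T (T−s+1) a_s for T ≥ 1, and define η : ℕ → ℝ by η₀ = 0 and, for T ≥ 1, η_T = (1/T)·[(T−1)·η_{T−1} + Σ_{s=1}^T Σ_{i=s}^T a_{i−s+1} c_{T−i+1}]. Suppose L_T / T → ℓ as T → ∞, |L_T| ≤ C·T for all T ≥ 1 and some constant C, and Σ_{t=1}^∞ |c_t| < ∞. Then η_T converges as T → ∞ and lim_{T→∞} η_T = ℓ · Σ_{t=1}^∞ c_t. -/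
open Filter Finset

private lemma med_inner (a : ℕ → ℝ) (i : ℕ) :
    ∑ s ∈ Finset.Icc 1 i, a (i - s + 1) = ∑ k ∈ Finset.Icc 1 i, a k := by
  refine Finset.sum_nbij' (fun s => i - s + 1) (fun k => i - k + 1) ?_ ?_ ?_ ?_ ?_ <;>
    simp only [Finset.mem_Icc] <;> intros <;> first | omega | trivial

private lemma med_swap (a c : ℕ → ℝ) (T : ℕ) :
    ∑ s ∈ Finset.Icc 1 T, ∑ i ∈ Finset.Icc s T, a (i - s + 1) * c (T - i + 1)
      = ∑ j ∈ Finset.range T, c (j + 1) * ∑ k ∈ Finset.Icc 1 (T - j), a k := by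
  rw [Finset.sum_comm' (t' := Finset.Icc 1 T) (s' := fun i => Finset.Icc 1 i)
    (by intro s i; simp only [Finset.mem_Icc]; omega)]
  refine Finset.sum_nbij' (fun i => T - i) (fun j => T - j) ?_ ?_ ?_ ?_ ?_ <;>
    simp only [Finset.mem_Icc, Finset.mem_range]
  · intro i hi; omega
  · intro j hj; omega
  · intro i hi; omega
  · intro j hj; omega
  · intro i hi
    have h1 : T - (T - i) = i := by omega
    have h2 : T - i + 1 = T - i + 1 := rfl
    rw [← Finset.sum_mul, med_inner, h1, mul_comm]

/-- Existence of the infinite-horizon individual mediation effect: with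
`L_T = Σ_{s=1}^T (T−s+1) a_s`, if `L_T / T → ℓ`, `|L_T| ≤ C·T` for all `T ≥ 1`, and
`Σ_{t≥1} |c_t| < ∞`, then the averaged mediation effect `η_T` defined by the
Theorem 1 recursion converges, with limit `ℓ · Σ_{t=1}^∞ c_t`. -/
theorem stmt_9 (a c : ℕ → ℝ) (L : ℕ → ℝ)
    (hLdef : ∀ T : ℕ, 1 ≤ T →
      L T = ∑ s ∈ Finset.Icc 1 T, ((T - s + 1 : ℕ) : ℝ) * a s)
    (η : ℕ → ℝ) (hη0 : η 0 = 0)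
    (hη : ∀ T : ℕ, 1 ≤ T → η T = (1 / (T : ℝ)) *
      (((T - 1 : ℕ) : ℝ) * η (T - 1) +
        ∑ s ∈ Finset.Icc 1 T, ∑ i ∈ Finset.Icc s T, a (i - s + 1) * c (T - i + 1)))
    (ℓ C : ℝ)
    (hLlim : Tendsto (fun T : ℕ => L T / (T : ℝ)) atTop (nhds ℓ))
    (hLbd : ∀ T : ℕ, 1 ≤ T → |L T| ≤ C * T)
    (hcs : Summable fun t : ℕ => |c (t + 1)|) :
    Tendsto η atTop (nhds (ℓ * ∑' t : ℕ, c (t + 1))) := by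
  -- L (m+1) = L m + A (m+1)
  have hLA : ∀ m : ℕ, 1 ≤ m →
      L (m + 1) = L m + ∑ k ∈ Finset.Icc 1 (m + 1), a k := by
    intro m hm
    rw [hLdef (m + 1) (by omega), hLdef m hm]
    rw [Finset.sum_Icc_succ_top (by omega : 1 ≤ m + 1) (fun s => ((m + 1 - s + 1 : ℕ) : ℝ) * a s),
        Finset.sum_Icc_succ_top (by omega : 1 ≤ m + 1) a]
    have hcast : ∀ s ∈ Finset.Icc 1 m, ((m + 1 - s + 1 : ℕ) : ℝ) * a s
        = ((m - s + 1 : ℕ) : ℝ) * a s + a s := by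
      intro s hs
      simp only [Finset.mem_Icc] at hs
      have : (m + 1 - s + 1 : ℕ) = (m - s + 1) + 1 := by omega
      rw [this, Nat.cast_add, Nat.cast_one, add_mul, one_mul]
    rw [Finset.sum_congr rfl hcast, Finset.sum_add_distrib]
    have : (m + 1 - (m + 1) + 1 : ℕ) = 1 := by omega
    rw [this]
    push_cast
    ring
  have hL1 : L 1 = ∑ k ∈ Finset.Icc 1 1, a k := by
    rw [hLdef 1 le_rfl]
    simp
  -- key identity : T * η T = ∑_{j<T} c (j+1) * L (T - j)
  have key : ∀ T : ℕ, 1 ≤ T →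
      (T : ℝ) * η T = ∑ j ∈ Finset.range T, c (j + 1) * L (T - j) := by
    intro T hT
    induction T, hT using Nat.le_induction with
    | base =>
      rw [hη 1 le_rfl]
      simp only [Nat.cast_one, one_mul, Nat.sub_self, Nat.cast_zero, zero_mul, zero_add,
        one_div, inv_one]
      rw [med_swap]
      simp [hL1]
    | succ T hT ih =>
      have hne : ((T : ℝ) + 1) ≠ 0 := by positivity
      have hrec := hη (T + 1) (by omega)
      have hsub : (T + 1 - 1 : ℕ) = T := by omega
      rw [hsub] at hrec
      rw [hrec]
      push_cast
      rw [one_div, mul_inv_cancel_left₀ hne]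
      rw [ih, med_swap]
      rw [Finset.sum_range_succ (fun j => c (j + 1) * ∑ k ∈ Finset.Icc 1 (T + 1 - j), a k),
          Finset.sum_range_succ (fun j => c (j + 1) * L (T + 1 - j))]
      rw [← add_assoc, ← Finset.sum_add_distrib]
      have hstep : ∀ j ∈ Finset.range T,
          c (j + 1) * L (T - j) + c (j + 1) * ∑ k ∈ Finset.Icc 1 (T + 1 - j), a k
            = c (j + 1) * L (T + 1 - j) := by
        intro j hj
        simp only [Finset.mem_range] at hj
        have h1 : T + 1 - j = (T - j) + 1 := by omega
        rw [h1, hLA (T - j) (by omega), mul_add, ← h1]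
      rw [Finset.sum_congr rfl hstep]
      have h2 : T + 1 - T = 1 := by omega
      rw [h2, hL1]
  -- the series form
  set f : ℕ → ℕ → ℝ := fun T j => if j < T then c (j + 1) * (L (T - j) / T) else 0 with hf
  have heq : ∀ T : ℕ, 1 ≤ T → η T = ∑' j, f T j := by
    intro T hT
    have hTne : (T : ℝ) ≠ 0 := by positivity
    rw [tsum_eq_sum (s := Finset.range T)
      (by intro j hj; simp only [Finset.mem_range] at hj; simp [hf, hj])]
    have : ∑ j ∈ Finset.range T, f T j
        = (∑ j ∈ Finset.range T, c (j + 1) * L (T - j)) / T := by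
      rw [Finset.sum_div]
      refine Finset.sum_congr rfl ?_
      intro j hj
      simp only [Finset.mem_range] at hj
      simp [hf, hj, mul_div_assoc]
    rw [this, ← key T hT, mul_comm, mul_div_assoc, div_self hTne, mul_one]
  -- C is nonneg
  have hC : 0 ≤ C := by
    have h := hLbd 1 le_rfl
    have := abs_nonneg (L 1)
    simp at h
    linarith
  -- bound
  have hbound : ∀ᶠ T in atTop, ∀ j, ‖f T j‖ ≤ C * |c (j + 1)| := by
    filter_upwards [eventually_ge_atTop 1] with T hT j
    simp only [Real.norm_eq_abs, hf]
    by_cases hj : j < T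
    · rw [if_pos hj, abs_mul, abs_div, Nat.abs_cast]
      have hL : |L (T - j)| ≤ C * T := by
        refine (hLbd (T - j) (by omega)).trans ?_
        exact mul_le_mul_of_nonneg_left (Nat.cast_le.mpr (by omega)) hC
      have hTpos : (0 : ℝ) < (T : ℝ) := by positivity
      have h5 : |c (j + 1)| * (|L (T - j)| / (T : ℝ)) ≤ |c (j + 1)| * C :=
        mul_le_mul_of_nonneg_left ((div_le_iff₀ hTpos).mpr hL) (abs_nonneg _)
      exact h5.trans_eq (mul_comm _ _)
    · rw [if_neg hj, abs_zero]
      positivity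
  -- pointwise limits
  have hpt : ∀ j : ℕ, Tendsto (fun T => f T j) atTop (nhds (c (j + 1) * ℓ)) := by
    intro j
    have h1 : Tendsto (fun T : ℕ => L (T - j) / ((T - j : ℕ) : ℝ)) atTop (nhds ℓ) :=
      hLlim.comp (tendsto_sub_atTop_nat j)
    have h2 : Tendsto (fun T : ℕ => ((T - j : ℕ) : ℝ) / T) atTop (nhds 1) := by
      have h3 : Tendsto (fun T : ℕ => 1 - (j : ℝ) / T) atTop (nhds 1) := by
        have := tendsto_const_div_atTop_nhds_zero_nat (j : ℝ)
        simpa using tendsto_const_nhds.sub this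
      refine h3.congr' ?_
      filter_upwards [eventually_ge_atTop (j + 1)] with T hT
      have hTne : (T : ℝ) ≠ 0 := by
        have : (0:ℕ) < T := by omega
        positivity
      have hc : ((T - j : ℕ) : ℝ) = (T : ℝ) - j := by
        have : j ≤ T := by omega
        push_cast [this]
        ring
      rw [hc]
      field_simp
    have h4 : Tendsto (fun T : ℕ =>
        c (j + 1) * (L (T - j) / ((T - j : ℕ) : ℝ) * (((T - j : ℕ) : ℝ) / T)))
        atTop (nhds (c (j + 1) * (ℓ * 1))) := tendsto_const_nhds.mul (h1.mul h2)
    rw [mul_one] at h4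
    refine h4.congr' ?_
    filter_upwards [eventually_ge_atTop (j + 1)] with T hT
    have hj : j < T := by omega
    have hTjne : ((T - j : ℕ) : ℝ) ≠ 0 := by
      have : (0:ℕ) < T - j := by omega
      positivity
    simp only [hf, if_pos hj]
    rw [div_mul_div_comm, mul_comm (((T - j : ℕ) : ℝ)), mul_div_mul_right _ _ hTjne]
  -- Tannery
  have htsum := tendsto_tsum_of_dominated_convergence (hcs.mul_left C) hpt hbound
  have hlim : (∑' j : ℕ, c (j + 1) * ℓ) = ℓ * ∑' t : ℕ, c (t + 1) := by
    rw [tsum_mul_right, mul_comm]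
  rw [hlim] at htsum
  refine htsum.congr' ?_
  filter_upwards [eventually_ge_atTop 1] with T hT
  exact (heq T hT).symm
end

section
/- Let d ≥ 1, δ₁, ζ₁, κ, γ₂ ∈ ℝ^d, Γ₁ ∈ ℝ^{d×d}, δ₂, ζ₂ ∈ ℝ, and fix j ∈ {1,…,d}. Define the (d+1)×(d+1) block matrices B₆ = [[0_{d×d}, 0_d],[κᵀ, 0]] and B₇ = [[Γ₁, ζ₁],[γ₂ᵀ, ζ₂]]. Let m : ℕ → ℝ^d, r : ℕ → ℝ satisfy m₁ = δ₁, r₁ = δ₂ + κᵀδ₁, and for t ≥ 2: m_t = Γ₁ m_{t−1} + ζ₁ r_{t−1}, r_t = ζ₂ r_{t−1} + κᵀ m_t + γ₂ᵀ m_{t−1}. Let p₁ ∈ ℝ^d, q₁ ∈ ℝ and let p : ℕ → ℝ^d, q : ℕ → ℝ satisfy, for t ≥ 2, p_t = Γ₁ p_{t−1} + ζ₁ q_{t−1} and q_t = ζ₂ q_{t−1} + κᵀ p_t + γ₂ᵀ p_{t−1}. Set a_t := (m_t)_j, s_t := (p_t)_j, and define c : ℕ → ℝ by c₁ = q₁ and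 c_T = q_T − Σ_{i=2}^T s_i c_{T−i+1} for T ≥ 2. Define η : ℕ → ℝ by η₀ = 0 and η_T = (1/T)·[(T−1)·η_{T−1} + Σ_{s=1}^T Σ_{i=s}^T a_{i−s+1} c_{T−i+1}]. Assume: Σ‖m_t‖ < ∞, Σ|r_t| < ∞, Σ‖p_t‖ < ∞, Σ|q_t| < ∞, Σ|c_t| < ∞; the matrix A := (1−ζ₂)(I − Γ₁) − ζ₁(κ + γ₂)ᵀ is invertible; the matrix I − B₆ − B₇ is invertible. Define B₁ := A^{-1}[(1−ζ₂) δ₁ + δ₂ ζ₁] ∈ ℝ^d; (B₂, B₃) := (I − B₆ − B₇)^{-1} B₇ (p₁, q₁) ∈ ℝ^d × ℝ; (B₄, B₅) := (B₁)_j · (B₂, B₃); and assume 1 + (B₂)_j ≠ 0. Then η_T converges as T → ∞ and lim_{T→∞} η_T = q₁ · (B₁)_j + (1 + (B₂)_j)^{-1} · (B₅ − q₁ · (B₄)_j). -/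
open Matrix Filter Finset Topology

/-!
In the state `x_t = (M_t, R_t)` both lag sequences obey `x_t = B₆ x_t + B₇ x_{t-1}`, so summing
over `t` gives `(1 - B₆ - B₇) (∑ x - x₁) = B₇ x₁`. For the mediator sequence `(p, q)` this says
that `(B₂, B₃) = (∑ p - p₁, ∑ q - q₁)`; for the treatment sequence `(m, r)`, eliminating the
outcome coordinate (a Schur complement) gives `A (∑ m) = (1 - ζ₂) δ₁ + δ₂ ζ₁`, i.e. `∑ m = B₁`.
The recursion for `c` says that `q` is the convolution of `(1, s₂, s₃, …)` with `c`, so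
`∑ q = (1 + B₂ⱼ) ∑ c`. The double sum in the recursion for `η` is the `T`-th partial sum of the
Cauchy product of `a` and `c`, hence tends to `B₁ⱼ ∑ c`, and `η_T` is its Cesàro mean.
Since `B₃ = ∑ q - q₁`, the value `B₁ⱼ ∑ c` is the stated limit.
-/

theorem hasSum_sumElim {n R : Type*} [AddCommMonoid R] [TopologicalSpace R]
    {f : ℕ → n → R} {g : ℕ → R} {F : n → R} {G : R}
    (hf : HasSum f F) (hg : HasSum g G) :
    HasSum (fun t => Sum.elim (f t) (fun _ => g t)) (Sum.elim F (fun _ : Unit => G)) :=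
  Pi.hasSum.2 fun | .inl i => Pi.hasSum.1 hf i | .inr _ => hg

theorem Summable.norm_apply {ι E : Type*} [Fintype ι] [SeminormedAddCommGroup E]
    {f : ℕ → ι → E} (hf : Summable fun t => ‖f t‖) (j : ι) : Summable fun t => ‖f t j‖ :=
  hf.of_nonneg_of_le (fun _ => norm_nonneg _) fun t => norm_le_pi_norm (f t) j

theorem HasSum.one_sub_sub_mulVec_sub {ι R : Type*} [Fintype ι] [DecidableEq ι] [CommRing R]
    [TopologicalSpace R] [IsTopologicalRing R] [T2Space R] {B₀ B₁ : Matrix ι ι R}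
    {x : ℕ → ι → R} {X : ι → R} (hx : HasSum x X)
    (hrec : ∀ t, x (t + 1) = B₀ *ᵥ x (t + 1) + B₁ *ᵥ x t) :
    (1 - B₀ - B₁) *ᵥ (X - x 0) = B₁ *ᵥ x 0 := by
  have hmulVec (B : Matrix ι ι R) {y : ℕ → ι → R} {Y : ι → R} (hy : HasSum y Y) :
      HasSum (fun t => B *ᵥ y t) (B *ᵥ Y) :=
    hy.map B.mulVecLin (continuous_const.matrix_mulVec continuous_id)
  have htail : HasSum (fun t => x (t + 1)) (X - x 0) := by
    simpa using (hasSum_nat_add_iff' 1).2 hx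
  have hfix : X - x 0 = B₀ *ᵥ (X - x 0) + B₁ *ᵥ X :=
    htail.unique <| by simpa only [← hrec] using (hmulVec B₀ htail).add (hmulVec B₁ hx)
  rw [sub_mulVec, sub_mulVec, one_mulVec, mulVec_sub B₁]
  nth_rewrite 1 [hfix]
  abel

section BlockSystem

variable {n R : Type*} [Fintype n] [CommRing R]

/-- With `lagMatrix`, the paper's `B₆` and `B₇`: the model reads
`x_t = contempMatrix κ *ᵥ x_t + lagMatrix Γ₁ ζ₁ γ₂ ζ₂ *ᵥ x_{t-1}` for `x_t = (M_t, R_t)`. -/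
def contempMatrix (κ : n → R) : Matrix (n ⊕ Unit) (n ⊕ Unit) R :=
  fromBlocks 0 0 (of fun _ i => κ i) 0

def lagMatrix (Γ : Matrix n n R) (ζ₁ γ₂ : n → R) (ζ₂ : R) : Matrix (n ⊕ Unit) (n ⊕ Unit) R :=
  fromBlocks Γ (of fun i _ => ζ₁ i) (of fun _ i => γ₂ i) (of fun _ _ => ζ₂)

theorem contempMatrix_mulVec (κ x : n → R) (y : R) :
    contempMatrix κ *ᵥ Sum.elim x (fun _ => y) = Sum.elim (0 : n → R) (fun _ => κ ⬝ᵥ x) := by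
  ext (i | _) <;> simp [contempMatrix, mulVec, dotProduct]

theorem lagMatrix_mulVec (Γ : Matrix n n R) (ζ₁ γ₂ x : n → R) (ζ₂ y : R) :
    lagMatrix Γ ζ₁ γ₂ ζ₂ *ᵥ Sum.elim x (fun _ => y) =
      Sum.elim (Γ *ᵥ x + y • ζ₁) (fun _ => γ₂ ⬝ᵥ x + ζ₂ * y) := by
  ext (i | _) <;> simp [lagMatrix, mulVec, dotProduct, mul_comm]

theorem sumElim_eq_contempMatrix_mulVec_add_lagMatrix_mulVec {Γ : Matrix n n R}
    {ζ₁ κ γ₂ x x' : n → R} {ζ₂ y y' : R}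
    (hx : x' = Γ *ᵥ x + y • ζ₁) (hy : y' = ζ₂ * y + κ ⬝ᵥ x' + γ₂ ⬝ᵥ x) :
    Sum.elim x' (fun _ => y') =
      contempMatrix κ *ᵥ Sum.elim x' (fun _ => y') +
        lagMatrix Γ ζ₁ γ₂ ζ₂ *ᵥ Sum.elim x (fun _ => y) := by
  rw [contempMatrix_mulVec, lagMatrix_mulVec]
  ext (i | _)
  · simp [hx]
  · simp [hy]; ring

variable [DecidableEq n]

theorem schurComplement_mulVec_eq {Γ : Matrix n n R} {ζ₁ κ γ₂ M δ₁ : n → R} {ζ₂ S δ₂ : R}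
    (h : (1 - contempMatrix κ - lagMatrix Γ ζ₁ γ₂ ζ₂) *ᵥ
        Sum.elim (M - δ₁) (fun _ => S - (δ₂ + κ ⬝ᵥ δ₁)) =
      lagMatrix Γ ζ₁ γ₂ ζ₂ *ᵥ Sum.elim δ₁ (fun _ => δ₂ + κ ⬝ᵥ δ₁)) :
    ((1 - ζ₂) • (1 - Γ) - vecMulVec ζ₁ (κ + γ₂)) *ᵥ M = (1 - ζ₂) • δ₁ + δ₂ • ζ₁ := by
  simp only [sub_mulVec, one_mulVec, contempMatrix_mulVec, lagMatrix_mulVec] at h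
  have hS := congrFun h (Sum.inr ())
  simp only [Pi.sub_apply, Sum.elim_inr, dotProduct_sub] at hS
  ext i
  have hM := congrFun h (Sum.inl i)
  simp only [Pi.sub_apply, Sum.elim_inl, Pi.add_apply, Pi.zero_apply, sub_zero, mulVec_sub,
    Pi.smul_apply, smul_eq_mul] at hM
  simp only [sub_mulVec, smul_mulVec, one_mulVec, vecMulVec_mulVec, Pi.sub_apply, Pi.add_apply,
    Pi.smul_apply, smul_eq_mul, add_dotProduct, MulOpposite.smul_eq_mul_unop, MulOpposite.unop_op]
  linear_combination (1 - ζ₂) * hM + ζ₁ i * hS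

variable [TopologicalSpace R] [IsTopologicalRing R] [T2Space R]

theorem one_sub_contempMatrix_sub_lagMatrix_mulVec {Γ : Matrix n n R} {ζ₁ κ γ₂ : n → R} {ζ₂ : R}
    {m : ℕ → n → R} {r : ℕ → R} {M : n → R} {S : R}
    (hm : ∀ t : ℕ, 2 ≤ t → m t = Γ *ᵥ m (t - 1) + (r (t - 1)) • ζ₁)
    (hr : ∀ t : ℕ, 2 ≤ t → r t = ζ₂ * r (t - 1) + κ ⬝ᵥ m t + γ₂ ⬝ᵥ m (t - 1))
    (hM : HasSum (fun t => m (t + 1)) M) (hS : HasSum (fun t => r (t + 1)) S) :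
    (1 - contempMatrix κ - lagMatrix Γ ζ₁ γ₂ ζ₂) *ᵥ Sum.elim (M - m 1) (fun _ => S - r 1) =
      lagMatrix Γ ζ₁ γ₂ ζ₂ *ᵥ Sum.elim (m 1) (fun _ => r 1) := by
  have := (hasSum_sumElim hM hS).one_sub_sub_mulVec_sub fun t =>
    sumElim_eq_contempMatrix_mulVec_add_lagMatrix_mulVec (hm (t + 2) (by omega))
      (hr (t + 2) (by omega))
  convert this using 2
  ext (i | _) <;> rfl

theorem eq_inv_mulVec_of_hasSum_lagSystem {Γ : Matrix n n R} {ζ₁ κ γ₂ δ₁ : n → R} {ζ₂ δ₂ : R}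
    {m : ℕ → n → R} {r : ℕ → R} {M : n → R} {S : R}
    (hm1 : m 1 = δ₁) (hr1 : r 1 = δ₂ + κ ⬝ᵥ δ₁)
    (hm : ∀ t : ℕ, 2 ≤ t → m t = Γ *ᵥ m (t - 1) + (r (t - 1)) • ζ₁)
    (hr : ∀ t : ℕ, 2 ≤ t → r t = ζ₂ * r (t - 1) + κ ⬝ᵥ m t + γ₂ ⬝ᵥ m (t - 1))
    (hM : HasSum (fun t => m (t + 1)) M) (hS : HasSum (fun t => r (t + 1)) S)
    (hA : IsUnit ((1 - ζ₂) • (1 - Γ) - vecMulVec ζ₁ (κ + γ₂))) :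
    M = ((1 - ζ₂) • (1 - Γ) - vecMulVec ζ₁ (κ + γ₂))⁻¹ *ᵥ ((1 - ζ₂) • δ₁ + δ₂ • ζ₁) := by
  have hsys := one_sub_contempMatrix_sub_lagMatrix_mulVec hm hr hM hS
  rw [hm1, hr1] at hsys
  have := hA.invertible
  rw [inv_mulVec_eq_vec (schurComplement_mulVec_eq hsys).symm]

end BlockSystem

section Reindexing

variable {R : Type*} [Semiring R]

theorem sum_Icc_two_mul_eq_sum_range (s c : ℕ → R) (n : ℕ) :
    ∑ i ∈ Icc 2 (n + 2), s i * c (n + 2 - i + 1) =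
      ∑ k ∈ range (n + 1), s (k + 2) * c (n - k + 1) := by
  rw [← Ico_add_one_right_eq_Icc, sum_Ico_eq_sum_range, show n + 2 + 1 - 2 = n + 1 by omega]
  refine sum_congr rfl fun k hk => ?_
  rw [show n + 2 - (2 + k) = n - k by omega, add_comm 2 k]

theorem sum_Icc_sum_Icc_mul_eq_sum_range (a c : ℕ → R) (T : ℕ) :
    ∑ s ∈ Icc 1 T, ∑ i ∈ Icc s T, a (i - s + 1) * c (T - i + 1) =
      ∑ k ∈ range T, ∑ l ∈ range (k + 1), a (l + 1) * c (k - l + 1) := by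
  rw [← Ico_add_one_right_eq_Icc, sum_Ico_eq_sum_range, Nat.add_sub_cancel,
    ← sum_range_reflect]
  refine sum_congr rfl fun k hk => ?_
  have hk := mem_range.1 hk
  rw [← Ico_add_one_right_eq_Icc, sum_Ico_eq_sum_range,
    show T + 1 - (1 + (T - 1 - k)) = k + 1 by omega]
  refine sum_congr rfl fun l hl => ?_
  have hl := mem_range.1 hl
  congr 2 <;> omega

end Reindexing

section Convolution

variable {R : Type*} [NormedRing R] [CompleteSpace R]

theorem hasSum_of_eq_sub_sum_Icc_mul {s c q : ℕ → R}
    (hs : Summable fun t => ‖s (t + 2)‖) (hcS : Summable fun t => ‖c (t + 1)‖)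
    (hc1 : c 1 = q 1) (hc : ∀ T : ℕ, 2 ≤ T → c T = q T - ∑ i ∈ Icc 2 T, s i * c (T - i + 1)) :
    HasSum (fun t => q (t + 1)) ((1 + ∑' t, s (t + 2)) * ∑' t, c (t + 1)) := by
  have hconv : HasSum (fun t => q (t + 2) - c (t + 2)) ((∑' t, s (t + 2)) * ∑' t, c (t + 1)) := by
    convert hasSum_sum_range_mul_of_summable_norm hs hcS using 2 with t
    rw [hc (t + 2) (by omega), sum_Icc_two_mul_eq_sum_range]
    abel
  have hdiff : HasSum (fun t => q (t + 1) - c (t + 1)) ((∑' t, s (t + 2)) * ∑' t, c (t + 1)) := by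
    refine (hasSum_nat_add_iff' 1).1 ?_
    simpa [hc1] using hconv
  convert hdiff.add hcS.of_norm.hasSum using 1
  · simp
  · rw [add_mul, one_mul, add_comm]

theorem tendsto_sum_Icc_sum_Icc_mul {a c : ℕ → R}
    (ha : Summable fun t => ‖a (t + 1)‖) (hc : Summable fun t => ‖c (t + 1)‖) :
    Tendsto (fun T => ∑ s ∈ Icc 1 T, ∑ i ∈ Icc s T, a (i - s + 1) * c (T - i + 1)) atTop
      (𝓝 ((∑' t, a (t + 1)) * ∑' t, c (t + 1))) := by
  simpa only [sum_Icc_sum_Icc_mul_eq_sum_range] using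
    (hasSum_sum_range_mul_of_summable_norm ha hc).tendsto_sum_nat

end Convolution

theorem tendsto_of_eq_cesaro_step {η u : ℕ → ℝ} {L : ℝ}
    (hη : ∀ T : ℕ, 1 ≤ T → η T = (1 / (T : ℝ)) * (((T - 1 : ℕ) : ℝ) * η (T - 1) + u T))
    (hu : Tendsto u atTop (𝓝 L)) : Tendsto η atTop (𝓝 L) := by
  have hsum : ∀ T : ℕ, (T : ℝ) * η T = ∑ k ∈ range T, u (k + 1) := by
    intro T
    induction T with
    | zero => simp
    | succ T ih =>
      rw [hη (T + 1) le_add_self, sum_range_succ, ← ih, Nat.add_sub_cancel]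
      field_simp
  refine ((hu.comp (tendsto_add_atTop_nat 1)).cesaro).congr' ?_
  filter_upwards [eventually_ge_atTop 1] with T hT
  rw [Function.comp_def, ← hsum, inv_mul_cancel_left₀ (by positivity)]

theorem stmt_10_general (d : ℕ)
    (δ₁ ζ₁ κ γ₂ : Fin d → ℝ) (Γ₁ : Matrix (Fin d) (Fin d) ℝ) (δ₂ ζ₂ : ℝ) (j : Fin d)
    (B₆ B₇ : Matrix (Fin d ⊕ Unit) (Fin d ⊕ Unit) ℝ)
    (hB₆ : B₆ = Matrix.fromBlocks (0 : Matrix (Fin d) (Fin d) ℝ)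
      (0 : Matrix (Fin d) Unit ℝ) (Matrix.of fun _ i => κ i) (0 : Matrix Unit Unit ℝ))
    (hB₇ : B₇ = Matrix.fromBlocks Γ₁ (Matrix.of fun i _ => ζ₁ i)
      (Matrix.of fun _ i => γ₂ i) (Matrix.of fun _ _ => ζ₂))
    -- lag effects of the treatment on mediators and outcome
    (m : ℕ → Fin d → ℝ) (r : ℕ → ℝ)
    (hm1 : m 1 = δ₁) (hr1 : r 1 = δ₂ + κ ⬝ᵥ δ₁)
    (hm : ∀ t : ℕ, 2 ≤ t → m t = Γ₁ *ᵥ m (t - 1) + (r (t - 1)) • ζ₁)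
    (hr : ∀ t : ℕ, 2 ≤ t →
      r t = ζ₂ * r (t - 1) + κ ⬝ᵥ m t + γ₂ ⬝ᵥ m (t - 1))
    -- lag effects of mediator j on mediators and outcome
    (p : ℕ → Fin d → ℝ) (q : ℕ → ℝ)
    (hp : ∀ t : ℕ, 2 ≤ t → p t = Γ₁ *ᵥ p (t - 1) + (q (t - 1)) • ζ₁)
    (hq : ∀ t : ℕ, 2 ≤ t →
      q t = ζ₂ * q (t - 1) + κ ⬝ᵥ p t + γ₂ ⬝ᵥ p (t - 1))
    -- scalar lag sequences
    (a sseq : ℕ → ℝ)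
    (ha : ∀ t : ℕ, a t = m t j) (hsseq : ∀ t : ℕ, sseq t = p t j)
    -- the intervened mediator-to-outcome effects
    (c : ℕ → ℝ) (hc1 : c 1 = q 1)
    (hc : ∀ T : ℕ, 2 ≤ T →
      c T = q T - ∑ i ∈ Finset.Icc 2 T, sseq i * c (T - i + 1))
    -- the averaged individual mediation effect
    (η : ℕ → ℝ)
    (hη : ∀ T : ℕ, 1 ≤ T → η T = (1 / (T : ℝ)) *
      (((T - 1 : ℕ) : ℝ) * η (T - 1) +
        ∑ s ∈ Finset.Icc 1 T, ∑ i ∈ Finset.Icc s T, a (i - s + 1) * c (T - i + 1)))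
    -- absolute summability assumptions
    (hmS : Summable fun t : ℕ => ‖m (t + 1)‖)
    (hrS : Summable fun t : ℕ => |r (t + 1)|)
    (hpS : Summable fun t : ℕ => ‖p (t + 1)‖)
    (hqS : Summable fun t : ℕ => |q (t + 1)|)
    (hcS : Summable fun t : ℕ => |c (t + 1)|)
    -- invertibility assumptions
    (A : Matrix (Fin d) (Fin d) ℝ)
    (hA : A = (1 - ζ₂) • ((1 : Matrix (Fin d) (Fin d) ℝ) - Γ₁) - vecMulVec ζ₁ (κ + γ₂))
    (hAu : IsUnit A)
    (hBu : IsUnit (1 - B₆ - B₇))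
    -- the quantities B₁, (B₂, B₃), (B₄, B₅)
    (B₁ : Fin d → ℝ) (hB₁ : B₁ = A⁻¹ *ᵥ ((1 - ζ₂) • δ₁ + δ₂ • ζ₁))
    (B₂₃ : Fin d ⊕ Unit → ℝ)
    (hB₂₃ : B₂₃ = (1 - B₆ - B₇)⁻¹ *ᵥ (B₇ *ᵥ Sum.elim (p 1) (fun _ => q 1)))
    (B₄₅ : Fin d ⊕ Unit → ℝ) (hB₄₅ : B₄₅ = (B₁ j) • B₂₃)
    (hne : 1 + B₂₃ (Sum.inl j) ≠ 0) :
    Tendsto η atTop (nhds (q 1 * B₁ j +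
      (1 + B₂₃ (Sum.inl j))⁻¹ *
        (B₄₅ (Sum.inr ()) - q 1 * B₄₅ (Sum.inl j)))) := by
  obtain rfl : B₆ = contempMatrix κ := hB₆
  obtain rfl : B₇ = lagMatrix Γ₁ ζ₁ γ₂ ζ₂ := hB₇
  subst hA hB₄₅
  have hM := hmS.of_norm.hasSum
  have hP := hpS.of_norm.hasSum
  have hQ := hqS.of_abs.hasSum
  have hMB : ∑' t, m (t + 1) = B₁ :=
    hB₁ ▸ eq_inv_mulVec_of_hasSum_lagSystem hm1 hr1 hm hr hM hrS.of_abs.hasSum hAu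
  have hB₂₃' : B₂₃ = Sum.elim (∑' t, p (t + 1) - p 1) (fun _ => ∑' t, q (t + 1) - q 1) := by
    rw [hB₂₃, ← one_sub_contempMatrix_sub_lagMatrix_mulVec hp hq hP hQ, mulVec_mulVec,
      nonsing_inv_mul _ ((isUnit_iff_isUnit_det _).1 hBu), one_mulVec]
  have hsSum : HasSum (fun t => sseq (t + 2)) (B₂₃ (Sum.inl j)) := by
    have hPtail : HasSum (fun t => p (t + 2)) (∑' t, p (t + 1) - p 1) := by
      simpa using (hasSum_nat_add_iff' 1).2 hP
    simpa only [hsseq, hB₂₃', Sum.elim_inl] using Pi.hasSum.1 hPtail j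
  have haSum : HasSum (fun t => a (t + 1)) (B₁ j) := by
    simpa [ha, hMB] using Pi.hasSum.1 hM j
  have hQC : (1 + B₂₃ (Sum.inl j)) * ∑' t, c (t + 1) = ∑' t, q (t + 1) := by
    have hsS : Summable fun t => ‖sseq (t + 2)‖ := by
      simpa only [hsseq] using ((summable_nat_add_iff 1).2 hpS).norm_apply j
    rw [← hsSum.tsum_eq]
    exact (hasSum_of_eq_sub_sum_Icc_mul hsS hcS hc1 hc).unique hQ
  have hB₃ : B₂₃ (Sum.inr ()) = (1 + B₂₃ (Sum.inl j)) * ∑' t, c (t + 1) - q 1 := by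
    rw [hQC, hB₂₃']
    rfl
  have haS : Summable fun t => ‖a (t + 1)‖ := by simpa only [ha] using hmS.norm_apply j
  convert tendsto_of_eq_cesaro_step hη (tendsto_sum_Icc_sum_Icc_mul haS hcS) using 2
  rw [haSum.tsum_eq, Pi.smul_apply, Pi.smul_apply, smul_eq_mul, smul_eq_mul, hB₃]
  field_simp
  ring

/-- Full algebraic content of the infinite-horizon identification theorem (Theorem 2):
in the stationary Markov mediation model, with `m t = θ_{A₁→M_t}`, `r t = θ_{A₁→R_t}`,
`p t = θ_{M_{1j}→M_t}`, `q t = θ_{M_{1j}→R_t}`, the intervened effects `c` given by the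
convolution recursion, and `η` the averaged individual mediation effect obeying the
stationary Theorem 1 recursion, one has
`η_T → q₁ · B₁ⱼ + (1 + B₂ⱼ)⁻¹ (B₅ − q₁ · B₄ⱼ)` with `B₁,…,B₇` as in Theorem 2. -/
theorem stmt_10 (d : ℕ) (hd : 1 ≤ d)
    (δ₁ ζ₁ κ γ₂ : Fin d → ℝ) (Γ₁ : Matrix (Fin d) (Fin d) ℝ) (δ₂ ζ₂ : ℝ) (j : Fin d)
    (B₆ B₇ : Matrix (Fin d ⊕ Unit) (Fin d ⊕ Unit) ℝ)
    (hB₆ : B₆ = Matrix.fromBlocks (0 : Matrix (Fin d) (Fin d) ℝ)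
      (0 : Matrix (Fin d) Unit ℝ) (Matrix.of fun _ i => κ i) (0 : Matrix Unit Unit ℝ))
    (hB₇ : B₇ = Matrix.fromBlocks Γ₁ (Matrix.of fun i _ => ζ₁ i)
      (Matrix.of fun _ i => γ₂ i) (Matrix.of fun _ _ => ζ₂))
    -- lag effects of the treatment on mediators and outcome
    (m : ℕ → Fin d → ℝ) (r : ℕ → ℝ)
    (hm1 : m 1 = δ₁) (hr1 : r 1 = δ₂ + κ ⬝ᵥ δ₁)
    (hm : ∀ t : ℕ, 2 ≤ t → m t = Γ₁ *ᵥ m (t - 1) + (r (t - 1)) • ζ₁)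
    (hr : ∀ t : ℕ, 2 ≤ t →
      r t = ζ₂ * r (t - 1) + κ ⬝ᵥ m t + γ₂ ⬝ᵥ m (t - 1))
    -- lag effects of mediator j on mediators and outcome
    (p : ℕ → Fin d → ℝ) (q : ℕ → ℝ)
    (hp : ∀ t : ℕ, 2 ≤ t → p t = Γ₁ *ᵥ p (t - 1) + (q (t - 1)) • ζ₁)
    (hq : ∀ t : ℕ, 2 ≤ t →
      q t = ζ₂ * q (t - 1) + κ ⬝ᵥ p t + γ₂ ⬝ᵥ p (t - 1))
    -- scalar lag sequences
    (a sseq : ℕ → ℝ)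
    (ha : ∀ t : ℕ, a t = m t j) (hsseq : ∀ t : ℕ, sseq t = p t j)
    -- the intervened mediator-to-outcome effects
    (c : ℕ → ℝ) (hc1 : c 1 = q 1)
    (hc : ∀ T : ℕ, 2 ≤ T →
      c T = q T - ∑ i ∈ Finset.Icc 2 T, sseq i * c (T - i + 1))
    -- the averaged individual mediation effect
    (η : ℕ → ℝ) (hη0 : η 0 = 0)
    (hη : ∀ T : ℕ, 1 ≤ T → η T = (1 / (T : ℝ)) *
      (((T - 1 : ℕ) : ℝ) * η (T - 1) +
        ∑ s ∈ Finset.Icc 1 T, ∑ i ∈ Finset.Icc s T, a (i - s + 1) * c (T - i + 1)))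
    -- absolute summability assumptions
    (hmS : Summable fun t : ℕ => ‖m (t + 1)‖)
    (hrS : Summable fun t : ℕ => |r (t + 1)|)
    (hpS : Summable fun t : ℕ => ‖p (t + 1)‖)
    (hqS : Summable fun t : ℕ => |q (t + 1)|)
    (hcS : Summable fun t : ℕ => |c (t + 1)|)
    -- invertibility assumptions
    (A : Matrix (Fin d) (Fin d) ℝ)
    (hA : A = (1 - ζ₂) • ((1 : Matrix (Fin d) (Fin d) ℝ) - Γ₁) - vecMulVec ζ₁ (κ + γ₂))
    (hAu : IsUnit A)
    (hBu : IsUnit (1 - B₆ - B₇))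
    -- the quantities B₁, (B₂, B₃), (B₄, B₅)
    (B₁ : Fin d → ℝ) (hB₁ : B₁ = A⁻¹ *ᵥ ((1 - ζ₂) • δ₁ + δ₂ • ζ₁))
    (B₂₃ : Fin d ⊕ Unit → ℝ)
    (hB₂₃ : B₂₃ = (1 - B₆ - B₇)⁻¹ *ᵥ (B₇ *ᵥ Sum.elim (p 1) (fun _ => q 1)))
    (B₄₅ : Fin d ⊕ Unit → ℝ) (hB₄₅ : B₄₅ = (B₁ j) • B₂₃)
    (hne : 1 + B₂₃ (Sum.inl j) ≠ 0) :
    Tendsto η atTop (nhds (q 1 * B₁ j +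
      (1 + B₂₃ (Sum.inl j))⁻¹ *
        (B₄₅ (Sum.inr ()) - q 1 * B₄₅ (Sum.inl j)))) :=
  stmt_10_general d δ₁ ζ₁ κ γ₂ Γ₁ δ₂ ζ₂ j B₆ B₇ hB₆ hB₇ m r hm1 hr1 hm hr p q hp hq a sseq ha hsseq
    c hc1 hc η hη hmS hrS hpS hqS hcS A hA hAu hBu B₁ hB₁ B₂₃ hB₂₃ B₄₅ hB₄₅ hne
end
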